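/- arXiv:2310.03227 — 5 statements merged into one kernel-verified Lean document; each statement's English description precedes it below -/
import Mathlib

section
/- For any $\lambda \in \mathbb{C}$ with $\operatorname{Im}(\lambda) \neq 0$, the limit as $M \to \infty$ of $\int_{-M}^{M} \log\left|1 - \frac{\lambda}{t}\right| dt$ equals $\pi |\operatorname{Im}(\lambda)|$. -/
open Filter Real MeasureTheory intervalIntegral Topology

-- integrability of log near 0
lemma logInt01 : IntervalIntegrable Real.log volume 0 1 := by
  have h := intervalIntegrable_deriv_of_nonneg (a := (0:ℝ)) (b := 1)
    (g := fun x => x - x * Real.log x) (g' := fun x => -Real.log x)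
    ((continuous_id.sub Real.continuous_mul_log).continuousOn)
    (fun x hx => by
      simp only [min_def, max_def] at hx
      norm_num at hx
      have hx0 : x ≠ 0 := ne_of_gt hx.1
      have : HasDerivAt (fun x : ℝ => x - x * Real.log x) (1 - (1 * Real.log x + x * x⁻¹)) x :=
        (hasDerivAt_id x).sub ((hasDerivAt_id x).mul (Real.hasDerivAt_log hx0))
      convert this using 1
      field_simp
      ring)
    (fun x hx => by
      simp only [min_def, max_def] at hx
      norm_num at hx
      have := Real.log_nonpos hx.1.le hx.2.le
      show (0:ℝ) ≤ -Real.log x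
      linarith)
  have e : Real.log = -(fun x => -Real.log x) := by ext x; simp
  rw [e]; exact h.neg

lemma logIntNeg : IntervalIntegrable Real.log volume (-1) 0 := by
  have h := intervalIntegrable_deriv_of_nonneg (a := (-1:ℝ)) (b := 0)
    (g := fun x => x - x * Real.log x) (g' := fun x => -Real.log x)
    ((continuous_id.sub Real.continuous_mul_log).continuousOn)
    (fun x hx => by
      simp only [min_def, max_def] at hx
      norm_num at hx
      have hx0 : x ≠ 0 := ne_of_lt hx.2
      have : HasDerivAt (fun x : ℝ => x - x * Real.log x) (1 - (1 * Real.log x + x * x⁻¹)) x :=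
        (hasDerivAt_id x).sub ((hasDerivAt_id x).mul (Real.hasDerivAt_log hx0))
      convert this using 1
      field_simp
      ring)
    (fun x hx => by
      simp only [min_def, max_def] at hx
      norm_num at hx
      have h1 : Real.log x = Real.log (-x) := (Real.log_neg_eq_log x).symm
      have : Real.log (-x) ≤ 0 := Real.log_nonpos (by linarith) (by linarith)
      show (0:ℝ) ≤ -Real.log x
      rw [h1]; linarith)
  have e : Real.log = -(fun x => -Real.log x) := by ext x; simp
  rw [e]; exact h.neg

lemma logIntM {M : ℝ} (hM : 1 ≤ M) : IntervalIntegrable Real.log volume (-M) M := by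
  have h1 : IntervalIntegrable Real.log volume (-M) (-1) :=
    intervalIntegrable_log (by
      intro h
      rw [Set.mem_uIcc] at h
      rcases h with ⟨h, _⟩ | ⟨_, h⟩ <;> linarith)
  have h2 : IntervalIntegrable Real.log volume 1 M :=
    intervalIntegrable_log (by
      intro h
      rw [Set.mem_uIcc] at h
      rcases h with ⟨h, _⟩ | ⟨_, h⟩ <;> linarith)
  exact ((h1.trans logIntNeg).trans logInt01).trans h2

noncomputable def Hf (a b t : ℝ) : ℝ :=
  (t - a)/2 * Real.log ((t-a)^2 + b^2) - (t - a) + b * Real.arctan ((t-a)/b)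

lemma Hf_deriv (a b : ℝ) (hb : b ≠ 0) (t : ℝ) :
    HasDerivAt (Hf a b) (Real.log ((t-a)^2 + b^2) / 2) t := by
  have hDpos : 0 < (t-a)^2 + b^2 := by positivity
  have h1 : HasDerivAt (fun t : ℝ => t - a) 1 t := (hasDerivAt_id t).sub_const a
  have hD : HasDerivAt (fun t : ℝ => (t-a)^2 + b^2) (2 * (t-a)^1 * 1) t :=
    (h1.pow 2).add_const _
  have hlog : HasDerivAt (fun t : ℝ => Real.log ((t-a)^2 + b^2))
      ((2 * (t-a)^1 * 1) / ((t-a)^2 + b^2)) t := hD.log (ne_of_gt hDpos)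
  have harg : HasDerivAt (fun t : ℝ => (t-a)/b) (1/b) t := h1.div_const b
  have harc : HasDerivAt (fun t : ℝ => Real.arctan ((t-a)/b))
      (1 / (1 + ((t-a)/b)^2) * (1/b)) t :=
    by exact (Real.hasDerivAt_arctan ((t-a)/b)).comp t harg
  have h := (((h1.div_const 2).mul hlog).sub h1).add (harc.const_mul b)
  refine h.congr_deriv ?_
  have h2 : 1 + ((t-a)/b)^2 = ((t-a)^2+b^2)/b^2 := by field_simp; ring
  rw [h2]
  field_simp
  ring

lemma G0_deriv (t : ℝ) (ht : t ≠ 0) :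
    HasDerivAt (fun x : ℝ => x * Real.log x - x) (Real.log t) t := by
  have : HasDerivAt (fun x : ℝ => x * Real.log x - x) (1 * Real.log t + t * t⁻¹ - 1) t :=
    ((hasDerivAt_id t).mul (Real.hasDerivAt_log ht)).sub (hasDerivAt_id t)
  convert this using 1
  field_simp
  ring

lemma f_eq (lam : ℂ) (hlam : lam.im ≠ 0) (t : ℝ) (ht : t ≠ 0) :
    Real.log ‖1 - lam / (t : ℂ)‖ =
      Real.log ((t - lam.re)^2 + lam.im^2) / 2 - Real.log t := by
  have htC : (t : ℂ) ≠ 0 := by exact_mod_cast ht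
  have h1 : (1 : ℂ) - lam / t = ((t : ℂ) - lam) / t := by field_simp
  have hne : (t : ℂ) - lam ≠ 0 := by
    intro h
    apply hlam
    have := congrArg Complex.im h
    simpa using this.symm
  rw [h1, norm_div, Real.log_div (norm_ne_zero_iff.mpr hne) (norm_ne_zero_iff.mpr htC)]
  congr 1
  · rw [Complex.norm_def, Real.log_sqrt (Complex.normSq_nonneg _), Complex.normSq_apply]
    congr 2
    simp [Complex.sub_re, Complex.sub_im]
    ring
  · rw [Complex.norm_real, Real.norm_eq_abs, Real.log_abs]

noncomputable def Gf (a b t : ℝ) : ℝ := Hf a b t - (t * Real.log t - t)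

lemma Gf_cont (a b : ℝ) (hb : b ≠ 0) : Continuous (Gf a b) := by
  unfold Gf Hf
  have h1 : Continuous fun t : ℝ => (t - a)^2 + b^2 := by continuity
  have h2 : Continuous fun t : ℝ => Real.log ((t - a)^2 + b^2) :=
    h1.log fun t => by positivity
  exact ((((continuous_id.sub continuous_const).div_const 2).mul h2).sub
    (continuous_id.sub continuous_const)).add
    (continuous_const.mul (Real.continuous_arctan.comp
      ((continuous_id.sub continuous_const).div_const b))) |>.sub
    (Real.continuous_mul_log.sub continuous_id)

lemma integral_eq (lam : ℂ) (hlam : lam.im ≠ 0) {M : ℝ} (hM : 1 ≤ M) :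
    ∫ t in (-M)..M, Real.log ‖1 - lam / (t : ℂ)‖ =
      Gf lam.re lam.im M - Gf lam.re lam.im (-M) := by
  set a := lam.re
  set b := lam.im
  set f : ℝ → ℝ := fun t => Real.log ‖1 - lam / (t : ℂ)‖ with hf
  set g : ℝ → ℝ := fun t => Real.log ((t - a)^2 + b^2) / 2 - Real.log t with hg
  have ccont : Continuous fun t : ℝ => Real.log ((t - a)^2 + b^2) / 2 := by
    have h1 : Continuous fun t : ℝ => (t - a)^2 + b^2 := by continuity
    exact (h1.log fun t => by positivity).div_const 2
  have hlog1 : IntervalIntegrable Real.log volume 0 M :=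
    logInt01.trans (intervalIntegrable_log (by
      intro h; rw [Set.mem_uIcc] at h
      rcases h with ⟨h, _⟩ | ⟨_, h⟩ <;> linarith))
  have hlog2 : IntervalIntegrable Real.log volume (-M) 0 :=
    (intervalIntegrable_log (by
      intro h; rw [Set.mem_uIcc] at h
      rcases h with ⟨h, _⟩ | ⟨_, h⟩ <;> linarith)).trans logIntNeg
  have hae : ∀ᵐ (t : ℝ) ∂volume, g t = f t := by
    have h0 : ∀ᵐ (t : ℝ) ∂volume, t ≠ 0 := by
      rw [MeasureTheory.ae_iff]
      simp [Set.setOf_eq_eq_singleton, Real.volume_singleton]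
    exact h0.mono fun t ht => (f_eq lam hlam t ht).symm
  have hfInt1 : IntervalIntegrable f volume 0 M :=
    (((ccont.intervalIntegrable 0 M).sub hlog1)).congr_ae (MeasureTheory.ae_restrict_of_ae hae)
  have hfInt2 : IntervalIntegrable f volume (-M) 0 :=
    (((ccont.intervalIntegrable (-M) 0).sub hlog2)).congr_ae (MeasureTheory.ae_restrict_of_ae hae)
  have hb : b ≠ 0 := hlam
  have hderiv : ∀ x : ℝ, x ≠ 0 → HasDerivAt (Gf a b) (f x) x := by
    intro x hx
    have h := (Hf_deriv a b hb x).sub (G0_deriv x hx)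
    rw [hf]
    simp only []
    rw [f_eq lam hlam x hx]
    exact h
  have hM0 : (0:ℝ) ≤ M := by linarith
  have e1 : ∫ t in (0:ℝ)..M, f t = Gf a b M - Gf a b 0 :=
    intervalIntegral.integral_eq_sub_of_hasDeriv_right_of_le hM0
      ((Gf_cont a b hb).continuousOn)
      (fun x hx => (hderiv x (ne_of_gt hx.1)).hasDerivWithinAt) hfInt1
  have e2 : ∫ t in (-M)..(0:ℝ), f t = Gf a b 0 - Gf a b (-M) :=
    intervalIntegral.integral_eq_sub_of_hasDeriv_right_of_le (by linarith)
      ((Gf_cont a b hb).continuousOn)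
      (fun x hx => (hderiv x (ne_of_lt hx.2)).hasDerivWithinAt) hfInt2
  have := intervalIntegral.integral_add_adjacent_intervals hfInt2 hfInt1
  rw [← this, e1, e2]
  ring

lemma lim_log_one_add (c : ℝ) : Tendsto (fun M : ℝ => Real.log (1 + c / M)) atTop (𝓝 0) := by
  have h : Tendsto (fun M : ℝ => 1 + c / M) atTop (𝓝 (1 + 0)) :=
    tendsto_const_nhds.add (tendsto_const_nhds.div_atTop tendsto_id)
  norm_num at h
  have := (Real.continuousAt_log one_ne_zero).tendsto.comp h
  rw [Real.log_one] at this
  exact this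

lemma lim_half_y (b : ℝ) : Tendsto (fun y : ℝ => y / 2 * Real.log (1 + b^2 / y^2)) atTop (𝓝 0) := by
  have h1 : Tendsto (fun y : ℝ => y^2 * Real.log (1 + b^2 / y^2)) atTop (𝓝 (b^2)) :=
    (Real.tendsto_mul_log_one_add_div_atTop (b^2)).comp (tendsto_pow_atTop two_ne_zero)
  have h2 : Tendsto (fun y : ℝ => 1 / (2 * y)) atTop (𝓝 0) :=
    tendsto_const_nhds.div_atTop (tendsto_id.const_mul_atTop two_pos)
  have h3 := h2.mul h1
  rw [zero_mul] at h3
  apply h3.congr'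
  filter_upwards [eventually_ge_atTop (1:ℝ)] with y hy
  have : y ≠ 0 := by linarith
  field_simp

lemma lim_sub_atTop (a : ℝ) : Tendsto (fun M : ℝ => M - a) atTop atTop := by
  simpa [sub_eq_add_neg] using tendsto_atTop_add_const_right atTop (-a) tendsto_id

lemma lim_arc (a b : ℝ) (hb : b ≠ 0) :
    Tendsto (fun M : ℝ => b * Real.arctan ((M - a)/b) + b * Real.arctan ((M + a)/b))
      atTop (𝓝 (Real.pi * |b|)) := by
  rcases hb.lt_or_gt with h | h
  · have hm : Tendsto (fun M : ℝ => (M - a)/b) atTop atBot :=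
      (lim_sub_atTop a).atTop_div_const_of_neg h
    have hp : Tendsto (fun M : ℝ => (M + a)/b) atTop atBot :=
      (lim_sub_atTop (-a)).atTop_div_const_of_neg h |>.congr (by intro x; rw [sub_neg_eq_add])
    have ha1 := (Real.tendsto_arctan_atBot.mono_right nhdsWithin_le_nhds).comp hm
    have ha2 := (Real.tendsto_arctan_atBot.mono_right nhdsWithin_le_nhds).comp hp
    have := (ha1.const_mul b).add (ha2.const_mul b)
    have e : b * -(Real.pi/2) + b * -(Real.pi/2) = Real.pi * |b| := by
      rw [abs_of_neg h]; ring
    rw [e] at this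
    exact this.congr (fun M => by simp [Function.comp])
  · have hm : Tendsto (fun M : ℝ => (M - a)/b) atTop atTop :=
      (lim_sub_atTop a).atTop_div_const h
    have hp : Tendsto (fun M : ℝ => (M + a)/b) atTop atTop :=
      ((lim_sub_atTop (-a)).atTop_div_const h).congr (by intro x; rw [sub_neg_eq_add])
    have ha1 := (Real.tendsto_arctan_atTop.mono_right nhdsWithin_le_nhds).comp hm
    have ha2 := (Real.tendsto_arctan_atTop.mono_right nhdsWithin_le_nhds).comp hp
    have := (ha1.const_mul b).add (ha2.const_mul b)
    have e : b * (Real.pi/2) + b * (Real.pi/2) = Real.pi * |b| := by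
      rw [abs_of_pos h]; ring
    rw [e] at this
    exact this.congr (fun M => by simp [Function.comp])

lemma decomp (a b : ℝ) (hb : b ≠ 0) {M : ℝ} (hM : |a| + 1 ≤ M) :
    Gf a b M - Gf a b (-M) =
      ((M - a) * Real.log (1 + (-a)/M) + (M + a) * Real.log (1 + a/M))
      + ((M - a)/2 * Real.log (1 + b^2/(M-a)^2) + (M + a)/2 * Real.log (1 + b^2/(M+a)^2))
      + (b * Real.arctan ((M - a)/b) + b * Real.arctan ((M + a)/b)) := by
  have ha1 : a ≤ |a| := le_abs_self a
  have ha2 : -a ≤ |a| := neg_le_abs a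
  have hM0 : 0 < M := by have := abs_nonneg a; linarith
  have key : ∀ c : ℝ, 0 < M - c →
      Real.log ((M - c)^2 + b^2) =
        2*Real.log M + 2*Real.log (1 + (-c)/M) + Real.log (1 + b^2/(M-c)^2) := by
    intro c hc
    have h1 : 1 + (-c)/M = (M - c)/M := by field_simp; ring
    have hp1 : (0:ℝ) < 1 + (-c)/M := by rw [h1]; positivity
    have hp2 : (0:ℝ) < 1 + b^2/(M-c)^2 := by positivity
    have e : (M - c)^2 + b^2 = M^2 * ((1 + (-c)/M)^2 * (1 + b^2/(M-c)^2)) := by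
      rw [h1]; field_simp
    rw [e, Real.log_mul (by positivity) (by positivity),
      Real.log_mul (by positivity) (by positivity), Real.log_pow, Real.log_pow]
    push_cast
    ring
  have k1 := key a (by linarith)
  have k2 := key (-a) (by linarith)
  simp only [sub_neg_eq_add, neg_neg] at k2
  unfold Gf Hf
  have hlneg : Real.log (-M) = Real.log M := Real.log_neg_eq_log M
  have e2 : (-M - a)^2 + b^2 = (M+a)^2 + b^2 := by ring
  have e3 : (-M - a)/b = -((M + a)/b) := by ring
  rw [hlneg, e2, e3, Real.arctan_neg, k1, k2]
  ring

lemma mainlim (a b : ℝ) (hb : b ≠ 0) :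
    Tendsto (fun M : ℝ => Gf a b M - Gf a b (-M)) atTop (𝓝 (Real.pi * |b|)) := by
  have t1 : Tendsto (fun M : ℝ => (M - a) * Real.log (1 + (-a)/M)) atTop (𝓝 (-a)) := by
    have hA := Real.tendsto_mul_log_one_add_div_atTop (-a)
    have hB := (lim_log_one_add (-a)).const_mul a
    rw [mul_zero] at hB
    have h := hA.sub hB
    rw [sub_zero] at h
    exact h.congr fun M => by ring
  have t2 : Tendsto (fun M : ℝ => (M + a) * Real.log (1 + a/M)) atTop (𝓝 a) := by
    have hA := Real.tendsto_mul_log_one_add_div_atTop a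
    have hB := (lim_log_one_add a).const_mul a
    rw [mul_zero] at hB
    have h := hA.add hB
    rw [add_zero] at h
    exact h.congr fun M => by ring
  have t3 : Tendsto (fun M : ℝ => (M - a)/2 * Real.log (1 + b^2/(M-a)^2)) atTop (𝓝 0) :=
    (lim_half_y b).comp (lim_sub_atTop a)
  have t4 : Tendsto (fun M : ℝ => (M + a)/2 * Real.log (1 + b^2/(M+a)^2)) atTop (𝓝 0) :=
    ((lim_half_y b).comp (lim_sub_atTop (-a))).congr fun M => by simp [Function.comp, sub_neg_eq_add]
  have t5 := lim_arc a b hb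
  have h := ((t1.add t2).add (t3.add t4)).add t5
  have e : (-a + a) + ((0:ℝ) + 0) + Real.pi * |b| = Real.pi * |b| := by ring
  rw [e] at h
  apply h.congr'
  filter_upwards [eventually_ge_atTop (|a| + 1)] with M hM
  exact (decomp a b hb hM).symm

theorem stmt4 (lam : ℂ) (hlam : lam.im ≠ 0) :
    Tendsto (fun M : ℝ => ∫ t in (-M)..M, Real.log ‖1 - lam / (t : ℂ)‖)
      atTop (nhds (Real.pi * |lam.im|)) := by
  apply (mainlim lam.re lam.im hlam).congr'
  filter_upwards [eventually_ge_atTop (1:ℝ)] with M hM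
  exact (integral_eq lam hlam hM).symm
end

section
/- Suppose $B \in M_n(\mathbb{C})$ is Hermitian and singular, $A \in M_n(\mathbb{C})$ is Hermitian, and the polynomial $x \mapsto \det(xA + B)$ has a simple zero at $x = 0$. If $v$ is a unit vector with $Bv = 0$, then $\langle Av, v \rangle \neq 0$. -/
open Matrix

/-- The derivative of `x ↦ det (x • A + B)` at `0` is `trace (adjugate B * A)`. -/
lemma hasDerivAt_det_smul_add (n : ℕ) (A B : Matrix (Fin n) (Fin n) ℂ) :
    HasDerivAt (fun x : ℝ => ((x : ℂ) • A + B).det)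
      ((Matrix.adjugate B * A).trace) 0 := by
  have h1 : HasDerivAt (fun x : ℝ => ((x : ℂ) • A + B).det)
      (∑ σ : Equiv.Perm (Fin n), (((Equiv.Perm.sign σ : ℤ)) : ℂ) *
        ∑ i, (∏ j ∈ Finset.univ.erase i, B (σ j) j) * A (σ i) i) 0 := by
    simp only [Matrix.det_apply', Matrix.add_apply, Matrix.smul_apply, smul_eq_mul]
    apply HasDerivAt.fun_sum
    intro σ _
    apply HasDerivAt.const_mul
    have hterm : ∀ i ∈ (Finset.univ : Finset (Fin n)),
        HasDerivAt (fun x : ℝ => (x : ℂ) * A (σ i) i + B (σ i) i) (A (σ i) i) 0 := by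
      intro i _
      have h0 : HasDerivAt (fun x : ℝ => (x : ℂ)) 1 0 := by
        simpa using (hasDerivAt_id (0 : ℝ)).ofReal_comp
      simpa using (h0.mul_const (A (σ i) i)).add_const (B (σ i) i)
    have := HasDerivAt.fun_finsetProd hterm
    simpa [smul_eq_mul] using this
  have E : (∑ σ : Equiv.Perm (Fin n), (((Equiv.Perm.sign σ : ℤ)) : ℂ) *
        ∑ i, (∏ j ∈ Finset.univ.erase i, B (σ j) j) * A (σ i) i)
      = (Matrix.adjugate B * A).trace := by
    have E2 : ∀ i : Fin n,
        (Matrix.adjugate B * A) i i = (B.updateCol i (fun k => A k i)).det := by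
      intro i
      rw [← Matrix.cramer_apply, Matrix.cramer_eq_adjugate_mulVec]
      simp [Matrix.mul_apply, Matrix.mulVec, dotProduct]
    rw [Matrix.trace]
    simp only [Matrix.diag_apply, E2, Matrix.det_apply']
    rw [Finset.sum_comm]
    refine Finset.sum_congr rfl fun σ _ => ?_
    rw [← Finset.mul_sum]
    congr 1
    refine Finset.sum_congr rfl fun i _ => ?_
    rw [← Finset.mul_prod_erase (Finset.univ)
      (fun j => (B.updateCol i fun k => A k i) (σ j) j) (Finset.mem_univ i)]
    rw [mul_comm (∏ j ∈ Finset.univ.erase i, B (σ j) j) (A (σ i) i)]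
    congr 1
    · simp [Matrix.updateCol_apply]
    · refine Finset.prod_congr rfl fun j hj => ?_
      have : j ≠ i := Finset.ne_of_mem_erase hj
      simp [Matrix.updateCol_apply, this]
  rwa [E] at h1

theorem stmt12 (n : ℕ) (A B : Matrix (Fin n) (Fin n) ℂ)
    (hA : A.IsHermitian) (hB : B.IsHermitian)
    (hdet : B.det = 0)
    (hsimple : deriv (fun x : ℝ => ((x : ℂ) • A + B).det) 0 ≠ 0)
    (v : Fin n → ℂ) (hv : star v ⬝ᵥ v = 1) (hBv : B.mulVec v = 0) :
    star v ⬝ᵥ A.mulVec v ≠ 0 := by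
  intro hAv
  have hderiv := (hasDerivAt_det_smul_add n A B).deriv
  rw [hderiv] at hsimple
  apply hsimple
  -- pick a coordinate where v is nonzero
  have hvne : v ≠ 0 := by
    intro h; rw [h] at hv; simp at hv
  obtain ⟨i0, hi0⟩ : ∃ i, v i ≠ 0 := by
    by_contra h; push_neg at h; exact hvne (funext h)
  set W : Matrix (Fin n) (Fin n) ℂ := (1 : Matrix (Fin n) (Fin n) ℂ).updateCol i0 v with hW
  have hcol : ∀ k, W k i0 = v k := by intro k; simp [hW, Matrix.updateCol_apply]
  have hdetW : W.det = v i0 := by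
    have h := Matrix.mulVec_cramer (1 : Matrix (Fin n) (Fin n) ℂ) v
    simp only [Matrix.one_mulVec, Matrix.det_one, one_smul] at h
    have : Matrix.cramer (1 : Matrix (Fin n) (Fin n) ℂ) v i0 = v i0 := by rw [h]
    rwa [Matrix.cramer_apply] at this
  -- star v ᵥ* B = 0
  have hvB : Matrix.vecMul (star v) B = 0 := by
    have := congrArg star hBv
    rw [Matrix.star_mulVec, hB.eq] at this
    simpa using this
  set B' : Matrix (Fin n) (Fin n) ℂ := Wᴴ * B * W with hB'
  set A' : Matrix (Fin n) (Fin n) ℂ := Wᴴ * A * W with hA'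
  have hrow : ∀ j, B' i0 j = 0 := by
    intro j
    have key : B' i0 j = (star v ᵥ* (B * W)) j := by
      rw [hB', Matrix.mul_assoc, Matrix.mul_apply]
      simp [Matrix.vecMul, dotProduct, Matrix.conjTranspose_apply, hcol]
    rw [key, ← Matrix.vecMul_vecMul, hvB, Matrix.zero_vecMul]
    simp
  have hcolB : ∀ j, B' j i0 = 0 := by
    intro j
    have key : B' j i0 = ((Wᴴ * B) *ᵥ v) j := by
      rw [hB', Matrix.mul_apply]
      simp [Matrix.mulVec, dotProduct, hcol]
    rw [key, ← Matrix.mulVec_mulVec, hBv, Matrix.mulVec_zero]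
    simp
  have hadj : ∀ i j, (i ≠ i0 ∨ j ≠ i0) → Matrix.adjugate B' i j = 0 := by
    intro i j hij
    rw [Matrix.adjugate_apply]
    by_cases hj : j = i0
    · subst hj
      have hi : i ≠ j := by tauto
      apply Matrix.det_eq_zero_of_column_eq_zero j
      intro k
      by_cases hk : k = j
      · subst hk
        simp [Matrix.updateRow_apply, Pi.single_eq_of_ne (Ne.symm hi)]
      · simp [Matrix.updateRow_apply, hk, hcolB]
    · apply Matrix.det_eq_zero_of_row_eq_zero i0
      intro k
      simp [Matrix.updateRow_apply, Ne.symm hj, hrow]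
  have hA'00 : A' i0 i0 = 0 := by
    have key : A' i0 i0 = ((Wᴴ * A) *ᵥ v) i0 := by
      rw [hA', Matrix.mul_apply]
      simp [Matrix.mulVec, dotProduct, hcol]
    have key2 : (Wᴴ *ᵥ (A *ᵥ v)) i0 = star v ⬝ᵥ A.mulVec v := by
      simp [Matrix.mulVec, dotProduct, Matrix.conjTranspose_apply, hcol]
    rw [key, ← Matrix.mulVec_mulVec, key2, hAv]
  have htr0 : (Matrix.adjugate B' * A').trace = 0 := by
    rw [Matrix.trace]
    simp only [Matrix.diag_apply, Matrix.mul_apply]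
    rw [Finset.sum_eq_single i0]
    · rw [Finset.sum_eq_single i0]
      · rw [hA'00, mul_zero]
      · intro k _ hk; rw [hadj i0 k (Or.inr hk), zero_mul]
      · simp
    · intro i _ hi
      apply Finset.sum_eq_zero
      intro k _
      rw [hadj i k (Or.inl hi), zero_mul]
    · simp
  -- relate the two traces
  have hrel : (Matrix.adjugate B' * A').trace
      = (Wᴴ.det * W.det) * (Matrix.adjugate B * A).trace := by
    have h1 : Matrix.adjugate B' = Matrix.adjugate W * (Matrix.adjugate B * Matrix.adjugate Wᴴ) := by
      rw [hB', Matrix.adjugate_mul_distrib, Matrix.adjugate_mul_distrib]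
    rw [h1, hA', Matrix.mul_assoc (Matrix.adjugate W), Matrix.trace_mul_comm]
    have h3 : (Matrix.adjugate B * Matrix.adjugate Wᴴ) * (Wᴴ * A * W) * Matrix.adjugate W
        = Matrix.adjugate B * ((Matrix.adjugate Wᴴ * Wᴴ) * (A * (W * Matrix.adjugate W))) := by
      simp only [Matrix.mul_assoc]
    rw [h3, Matrix.adjugate_mul, Matrix.mul_adjugate]
    simp only [Matrix.smul_mul, Matrix.mul_smul, Matrix.one_mul, Matrix.mul_one,
      Matrix.trace_smul, smul_eq_mul, smul_smul]
    ring
  have hdWne : Wᴴ.det * W.det ≠ 0 := by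
    rw [Matrix.det_conjTranspose, hdetW]
    simp [hi0]
  have := hrel.symm.trans htr0
  exact (mul_eq_zero.mp this).resolve_left hdWne
end

section
/- Let $f : \mathbb{R} \to \mathbb{R}$ be continuous and convex, and let $A, B \in M_n(\mathbb{C})$ be Hermitian. Then the function $F(t) = \operatorname{tr} f(tA + B)$ is convex on $\mathbb{R}$. -/
open Matrix

lemma peierls {n : ℕ} {M : Matrix (Fin n) (Fin n) ℂ} (hM : M.IsHermitian)
    (U : Matrix.unitaryGroup (Fin n) ℂ)
    {f : ℝ → ℝ} (hf : ConvexOn ℝ Set.univ f) :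
    ∑ k, f ((((U : Matrix (Fin n) (Fin n) ℂ)ᴴ * M * U) k k).re)
      ≤ ∑ j, f (hM.eigenvalues j) := by
  set V : Matrix (Fin n) (Fin n) ℂ := (hM.eigenvectorUnitary : Matrix (Fin n) (Fin n) ℂ) with hV
  set W : Matrix (Fin n) (Fin n) ℂ := Vᴴ * (U : Matrix (Fin n) (Fin n) ℂ) with hW
  have hVu : V ∈ Matrix.unitaryGroup (Fin n) ℂ := hM.eigenvectorUnitary.2
  have hWu : W ∈ Matrix.unitaryGroup (Fin n) ℂ := mul_mem (Unitary.star_mem hVu) U.2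
  have hWW : Wᴴ * W = 1 := by
    simpa [star_eq_conjTranspose] using (Matrix.mem_unitaryGroup_iff').mp hWu
  have hWW' : W * Wᴴ = 1 := by
    simpa [star_eq_conjTranspose] using (Matrix.mem_unitaryGroup_iff).mp hWu
  set w : Fin n → Fin n → ℝ := fun j k => Complex.normSq (W j k) with hw
  have hw_nonneg : ∀ j k, 0 ≤ w j k := fun j k => Complex.normSq_nonneg _
  have hcolsum : ∀ k, ∑ j, w j k = 1 := by
    intro k
    have h1 := congrArg (fun X => X k k) hWW
    simp only [Matrix.mul_apply, Matrix.one_apply_eq, conjTranspose_apply] at h1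
    have h2 : ∑ j, (w j k : ℂ) = 1 := by
      rw [← h1]
      refine Finset.sum_congr rfl fun j _ => ?_
      simp [hw, Complex.normSq_eq_conj_mul_self]
    exact_mod_cast h2
  have hrowsum : ∀ j, ∑ k, w j k = 1 := by
    intro j
    have h1 := congrArg (fun X => X j j) hWW'
    simp only [Matrix.mul_apply, Matrix.one_apply_eq, conjTranspose_apply] at h1
    have h2 : ∑ k, (w j k : ℂ) = 1 := by
      rw [← h1]
      refine Finset.sum_congr rfl fun k _ => ?_
      simp [hw, Complex.normSq_eq_conj_mul_self]
      ring
    exact_mod_cast h2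
  have hdiag : ∀ k, (((U : Matrix (Fin n) (Fin n) ℂ)ᴴ * M * (U : Matrix (Fin n) (Fin n) ℂ)) k k).re
      = ∑ j, w j k * hM.eigenvalues j := by
    intro k
    have hM' : (U : Matrix (Fin n) (Fin n) ℂ)ᴴ * M * (U : Matrix (Fin n) (Fin n) ℂ)
        = Wᴴ * diagonal (RCLike.ofReal ∘ hM.eigenvalues) * W := by
      conv_lhs => rw [hM.spectral_theorem, Unitary.conjStarAlgAut_apply]
      simp only [Unitary.coe_star, star_eq_conjTranspose, hW, conjTranspose_mul, conjTranspose_conjTranspose, hV]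
      noncomm_ring
    rw [hM']
    have hent : ((Wᴴ * diagonal (RCLike.ofReal ∘ hM.eigenvalues) * W : Matrix (Fin n) (Fin n) ℂ)) k k
        = ∑ j, ((w j k * hM.eigenvalues j : ℝ) : ℂ) := by
      rw [Matrix.mul_assoc, Matrix.mul_apply]
      refine Finset.sum_congr rfl fun j _ => ?_
      rw [Matrix.mul_apply, Finset.sum_eq_single j (by intro b _ hb; simp [Matrix.diagonal_apply_ne _ (Ne.symm hb)])
        (by intro h; exact absurd (Finset.mem_univ j) h)]
      simp [hw, conjTranspose_apply, diagonal_apply_eq, Complex.normSq_eq_conj_mul_self,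
        RCLike.ofReal_alg]
      ring
    rw [hent]
    rw [← Complex.ofReal_sum]
    simp
  calc ∑ k, f ((((U : Matrix (Fin n) (Fin n) ℂ)ᴴ * M * U) k k).re)
      ≤ ∑ k, ∑ j, w j k * f (hM.eigenvalues j) := by
        refine Finset.sum_le_sum fun k _ => ?_
        rw [hdiag k]
        have := hf.map_sum_le (t := Finset.univ) (w := fun j => w j k)
          (p := fun j => hM.eigenvalues j) (fun j _ => hw_nonneg j k) (hcolsum k)
          (fun j _ => Set.mem_univ _)
        simpa [smul_eq_mul] using this
    _ = ∑ j, f (hM.eigenvalues j) := by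
        rw [Finset.sum_comm]
        refine Finset.sum_congr rfl fun j _ => ?_
        rw [← Finset.sum_mul, hrowsum j, one_mul]

theorem stmt14 (n : ℕ) (A B : Matrix (Fin n) (Fin n) ℂ)
    (hA : A.IsHermitian) (hB : B.IsHermitian)
    (f : ℝ → ℝ) (hf_cont : Continuous f) (hf_conv : ConvexOn ℝ Set.univ f)
    (F : ℝ → ℝ)
    (hF : ∀ (t : ℝ) (h : (t • A + B).IsHermitian),
      F t = ∑ i, f (h.eigenvalues i)) :
    ConvexOn ℝ Set.univ F := by
  have herm : ∀ t : ℝ, (t • A + B).IsHermitian := by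
    intro t
    unfold Matrix.IsHermitian at *
    rw [conjTranspose_add, conjTranspose_smul, star_trivial, hA, hB]
  refine ⟨convex_univ, fun t₁ _ t₂ _ a b ha hb hab => ?_⟩
  set H₁ : Matrix (Fin n) (Fin n) ℂ := t₁ • A + B with hH₁
  set H₂ : Matrix (Fin n) (Fin n) ℂ := t₂ • A + B with hH₂
  have h₁ : H₁.IsHermitian := herm t₁
  have h₂ : H₂.IsHermitian := herm t₂
  have h : ((a • t₁ + b • t₂) • A + B).IsHermitian := herm _
  set U := h.eigenvectorUnitary with hU
  set x : Fin n → ℝ := fun k =>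
    (((U : Matrix (Fin n) (Fin n) ℂ)ᴴ * H₁ * (U : Matrix (Fin n) (Fin n) ℂ)) k k).re with hx
  set y : Fin n → ℝ := fun k =>
    (((U : Matrix (Fin n) (Fin n) ℂ)ᴴ * H₂ * (U : Matrix (Fin n) (Fin n) ℂ)) k k).re with hy
  have hcomb : (a • t₁ + b • t₂) • A + B = a • H₁ + b • H₂ := by
    have hB1 : B = a • B + b • B := by rw [← add_smul, hab, one_smul]
    conv_lhs => rw [hB1]
    rw [hH₁, hH₂, smul_add, smul_add, smul_smul, smul_smul, add_smul]
    simp only [smul_eq_mul]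
    abel
  have heig : ∀ k, h.eigenvalues k = a * x k + b * y k := by
    intro k
    have hd : (star (h.eigenvectorUnitary : Matrix (Fin n) (Fin n) ℂ)) * ((a • t₁ + b • t₂) • A + B) * (h.eigenvectorUnitary : Matrix (Fin n) (Fin n) ℂ) = diagonal (RCLike.ofReal ∘ h.eigenvalues) := by
      have := h.conjStarAlgAut_star_eigenvectorUnitary
      rwa [Unitary.conjStarAlgAut_apply, Unitary.coe_star, star_star] at this
    have hent := congrArg (fun X => (X k k).re) hd
    simp only [diagonal_apply_eq, Function.comp_apply] at hent
    rw [← hU] at hent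
    simp only [Matrix.star_eq_conjTranspose, Complex.ofReal_re] at hent
    have : ((U : Matrix (Fin n) (Fin n) ℂ)ᴴ * ((a • t₁ + b • t₂) • A + B)
        * (U : Matrix (Fin n) (Fin n) ℂ))
        = a • ((U : Matrix (Fin n) (Fin n) ℂ)ᴴ * H₁ * (U : Matrix (Fin n) (Fin n) ℂ))
          + b • ((U : Matrix (Fin n) (Fin n) ℂ)ᴴ * H₂ * (U : Matrix (Fin n) (Fin n) ℂ)) := by
      rw [hcomb]
      rw [Matrix.mul_add, Matrix.add_mul, mul_smul_comm, mul_smul_comm,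
        smul_mul_assoc, smul_mul_assoc]
    rw [this] at hent
    simp only [Matrix.add_apply, Matrix.smul_apply, Complex.add_re, Complex.real_smul,
      RCLike.ofReal_re, Complex.ofReal_re] at hent
    simp only [Matrix.add_apply, Matrix.smul_apply, Complex.add_re, Complex.real_smul,
      Complex.mul_re, Complex.ofReal_re, Complex.ofReal_im, zero_mul, sub_zero] at hent
    simp at hent
    exact hent.symm
  rw [hF _ h, hF _ h₁, hF _ h₂]
  calc ∑ k, f (h.eigenvalues k)
      ≤ ∑ k, (a * f (x k) + b * f (y k)) := by
        refine Finset.sum_le_sum fun k _ => ?_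
        rw [heig k]
        have := hf_conv.2 (Set.mem_univ (x k)) (Set.mem_univ (y k)) ha hb hab
        simpa [smul_eq_mul] using this
    _ = a * ∑ k, f (x k) + b * ∑ k, f (y k) := by
        rw [Finset.sum_add_distrib, Finset.mul_sum, Finset.mul_sum]
    _ ≤ a * ∑ j, f (h₁.eigenvalues j) + b * ∑ j, f (h₂.eigenvalues j) := by
        exact add_le_add (mul_le_mul_of_nonneg_left (peierls h₁ U hf_conv) ha)
          (mul_le_mul_of_nonneg_left (peierls h₂ U hf_conv) hb)
    _ = a • ∑ j, f (h₁.eigenvalues j) + b • ∑ j, f (h₂.eigenvalues j) := by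
        simp [smul_eq_mul]
end

section
/- Let $f : \mathbb{R} \to \mathbb{R}$ be continuous and non-decreasing, let $A, B \in M_n(\mathbb{C})$ be Hermitian with $A$ positive semidefinite. Then the function $F(t) = \operatorname{tr} f(tA + B)$ is non-decreasing on $\mathbb{R}$. -/
open Matrix ComplexOrder
open Finset

local notation "⟪" x ", " y "⟫" => @inner ℂ _ _ x y

lemma quad_eq {n : ℕ} {M : Matrix (Fin n) (Fin n) ℂ} (hM : M.IsHermitian)
    (x : EuclideanSpace ℂ (Fin n)) :
    RCLike.re ⟪x, Matrix.toEuclideanLin M x⟫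
      = ∑ i, hM.eigenvalues i * ‖hM.eigenvectorBasis.repr x i‖^2 := by
  set b := hM.eigenvectorBasis
  have hsym := (Matrix.isHermitian_iff_isSymmetric).mp hM
  have key : ⟪x, Matrix.toEuclideanLin M x⟫
      = ∑ i, (hM.eigenvalues i : ℂ) * (⟪x, b i⟫ * ⟪b i, x⟫) := by
    rw [← b.sum_inner_mul_inner x (Matrix.toEuclideanLin M x)]
    congr 1
    funext i
    have : ⟪b i, Matrix.toEuclideanLin M x⟫ = (hM.eigenvalues i : ℂ) * ⟪b i, x⟫ := by
      rw [← hsym (b i) x]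
      have hb : Matrix.toEuclideanLin M (b i) = (hM.eigenvalues i : ℝ) • (b i) := by
        apply (WithLp.equiv 2 (Fin n → ℂ)).injective
        simp only [WithLp.equiv_apply, Matrix.ofLp_toEuclideanLin_apply]
        have := hM.mulVec_eigenvectorBasis i
        simpa [Matrix.toLin'_apply] using this
      rw [hb, RCLike.real_smul_eq_coe_smul (K := ℂ), inner_smul_left]
      simp
    rw [this]; ring
  rw [key, map_sum]
  congr 1
  funext i
  have h1 : ⟪x, b i⟫ = starRingEnd ℂ ⟪b i, x⟫ := (inner_conj_symm _ _).symm
  rw [h1, mul_comm (starRingEnd ℂ _) _, RCLike.mul_conj]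
  have h2 : ⟪b i, x⟫ = b.repr x i := (b.repr_apply_apply x i).symm
  rw [h2]
  simp [← Complex.ofReal_pow, ← Complex.ofReal_mul]

lemma norm_sq_repr {n : ℕ} (b : OrthonormalBasis (Fin n) ℂ (EuclideanSpace ℂ (Fin n)))
    (x : EuclideanSpace ℂ (Fin n)) : ‖x‖^2 = ∑ i, ‖b.repr x i‖^2 := by
  rw [← b.repr.norm_map x, EuclideanSpace.norm_eq, Real.sq_sqrt]
  positivity

lemma repr_eq_zero_of_mem_span {n : ℕ}
    (b : OrthonormalBasis (Fin n) ℂ (EuclideanSpace ℂ (Fin n))) (s : Finset (Fin n))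
    {x : EuclideanSpace ℂ (Fin n)}
    (hx : x ∈ Submodule.span ℂ (b '' (s : Set (Fin n)))) {i : Fin n} (hi : i ∉ s) :
    b.repr x i = 0 := by
  induction hx using Submodule.span_induction with
  | mem y hy =>
      obtain ⟨j, hj, rfl⟩ := hy
      rw [b.repr_self]
      simp only [EuclideanSpace.single_apply]
      rw [if_neg]
      rintro rfl; exact hi hj
  | zero => simp
  | add y z _ _ hy hz => rw [map_add]; simp [hy, hz]
  | smul c y _ hy => rw [_root_.map_smul]; simp [hy]

lemma finrank_span_basis_image {n : ℕ}
    (b : OrthonormalBasis (Fin n) ℂ (EuclideanSpace ℂ (Fin n))) (s : Finset (Fin n)) :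
    Module.finrank ℂ (Submodule.span ℂ (b '' (s : Set (Fin n)))) = s.card := by
  have hli : LinearIndependent ℂ (fun i : s => b i) :=
    b.orthonormal.linearIndependent.comp Subtype.val Subtype.val_injective
  have himg : b '' (s : Set (Fin n)) = Set.range (fun i : s => b i) := by
    rw [Set.image_eq_range]; rfl
  rw [himg, finrank_span_eq_card hli, Fintype.card_coe]

lemma count_mono {n : ℕ} {M N : Matrix (Fin n) (Fin n) ℂ} (hM : M.IsHermitian)
    (hN : N.IsHermitian) (hMN : (N - M).PosSemidef) (a : ℝ) :
    (Finset.univ.filter (fun i => a < hM.eigenvalues i)).card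
      ≤ (Finset.univ.filter (fun i => a < hN.eigenvalues i)).card := by
  classical
  set v := hM.eigenvectorBasis
  set w := hN.eigenvectorBasis
  set S : Finset (Fin n) := Finset.univ.filter (fun i => a < hM.eigenvalues i) with hS
  set S' : Finset (Fin n) := Finset.univ.filter (fun i => a < hN.eigenvalues i) with hS'
  set T : Finset (Fin n) := Finset.univ.filter (fun i => ¬ a < hN.eigenvalues i) with hT
  set V := Submodule.span ℂ (v '' (S : Set (Fin n)))
  set W := Submodule.span ℂ (w '' (T : Set (Fin n)))
  -- quadratic comparison
  have hcmp : ∀ x : EuclideanSpace ℂ (Fin n),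
      RCLike.re ⟪x, Matrix.toEuclideanLin M x⟫ ≤ RCLike.re ⟪x, Matrix.toEuclideanLin N x⟫ := by
    intro x
    have h0 := hMN.re_dotProduct_nonneg (WithLp.equiv 2 (Fin n → ℂ) x)
    simp only [EuclideanSpace.inner_eq_star_dotProduct, Matrix.toEuclideanLin_apply,
      Equiv.apply_symm_apply, WithLp.equiv_apply] at *
    rw [Matrix.sub_mulVec, dotProduct_sub, map_sub] at h0
    rw [dotProduct_comm (M *ᵥ _), dotProduct_comm (N *ᵥ _)]
    linarith
  -- trivial intersection
  have hdisj : V ⊓ W = ⊥ := by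
    rw [Submodule.eq_bot_iff]
    intro x hx
    by_contra hx0
    obtain ⟨hxV, hxW⟩ := Submodule.mem_inf.mp hx
    have hMx : a * ‖x‖^2 < RCLike.re ⟪x, Matrix.toEuclideanLin M x⟫ := by
      rw [quad_eq hM, norm_sq_repr v, Finset.mul_sum]
      apply Finset.sum_lt_sum
      · intro i _
        by_cases hi : i ∈ S
        · have : a < hM.eigenvalues i := (Finset.mem_filter.mp hi).2
          nlinarith [sq_nonneg ‖v.repr x i‖]
        · rw [repr_eq_zero_of_mem_span v S hxV hi]; simp
      · have hrx : v.repr x ≠ 0 := by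
          simp only [ne_eq, map_eq_zero_iff v.repr (LinearIsometryEquiv.injective _)]
          exact hx0
        obtain ⟨i, hi⟩ : ∃ i, v.repr x i ≠ 0 := by
          by_contra h
          push_neg at h
          exact hrx (PiLp.ext fun i => h i)
        have hiS : i ∈ S := by
          by_contra hiS
          exact hi (repr_eq_zero_of_mem_span v S hxV hiS)
        refine ⟨i, Finset.mem_univ i, ?_⟩
        have h1 : a < hM.eigenvalues i := (Finset.mem_filter.mp hiS).2
        have h2 : 0 < ‖v.repr x i‖^2 := pow_pos (norm_pos_iff.mpr hi) 2
        nlinarith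
    have hNx : RCLike.re ⟪x, Matrix.toEuclideanLin N x⟫ ≤ a * ‖x‖^2 := by
      rw [quad_eq hN, norm_sq_repr w, Finset.mul_sum]
      apply Finset.sum_le_sum
      intro i _
      by_cases hi : i ∈ T
      · have : ¬ a < hN.eigenvalues i := (Finset.mem_filter.mp hi).2
        push_neg at this
        nlinarith [sq_nonneg ‖w.repr x i‖]
      · rw [repr_eq_zero_of_mem_span w T hxW hi]; simp
    linarith [hcmp x]
  -- dimension count
  have hdim : Module.finrank ℂ V + Module.finrank ℂ W ≤ n := by
    have := Submodule.finrank_sup_add_finrank_inf_eq V W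
    rw [hdisj] at this
    simp only [finrank_bot, add_zero] at this
    rw [← this]
    have := Submodule.finrank_le (V ⊔ W)
    simpa using this
  rw [finrank_span_basis_image, finrank_span_basis_image] at hdim
  have hTS : T.card + S'.card = n := by
    rw [hT, hS']
    rw [Finset.filter_not]
    have := Finset.card_sdiff_of_subset (Finset.filter_subset (fun i => a < hN.eigenvalues i) Finset.univ)
    rw [this]
    have hle := Finset.card_filter_le Finset.univ (fun i => a < hN.eigenvalues i)
    simp only [Finset.card_univ, Fintype.card_fin] at *
    omega
  omega

-- sorted version
lemma sorted_dom {n : ℕ} (x y : Fin n → ℝ) (hx : Monotone x) (hy : Monotone y)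
    (hc : ∀ a : ℝ, (univ.filter (fun i => a < x i)).card ≤ (univ.filter (fun i => a < y i)).card) :
    ∀ k, x k ≤ y k := by
  intro k
  by_contra hlt
  push_neg at hlt
  have h1 : Finset.Ici k ⊆ univ.filter (fun i => y k < x i) := by
    intro i hi
    simp only [mem_filter, mem_univ, true_and]
    exact lt_of_lt_of_le hlt (hx (Finset.mem_Ici.mp hi))
  have h2 : univ.filter (fun i => y k < y i) ⊆ Finset.Ioi k := by
    intro i hi
    simp only [mem_filter, mem_univ, true_and] at hi
    rw [Finset.mem_Ioi]
    by_contra hik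
    push_neg at hik
    exact absurd (hy hik) (not_le.mpr hi)
  have := (Finset.card_le_card h1).trans ((hc (y k)).trans (Finset.card_le_card h2))
  rw [Fin.card_Ici, Fin.card_Ioi] at this
  omega

lemma tuple_sum_le {n : ℕ} (x y : Fin n → ℝ) (f : ℝ → ℝ) (hf : Monotone f)
    (hc : ∀ a : ℝ, (univ.filter (fun i => a < x i)).card ≤ (univ.filter (fun i => a < y i)).card) :
    ∑ i, f (x i) ≤ ∑ i, f (y i) := by
  have hxs := Tuple.monotone_sort x
  have hys := Tuple.monotone_sort y
  have hc' : ∀ a : ℝ, (univ.filter (fun i => a < (x ∘ Tuple.sort x) i)).card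
      ≤ (univ.filter (fun i => a < (y ∘ Tuple.sort y) i)).card := by
    intro a
    have ex : (univ.filter (fun i => a < (x ∘ Tuple.sort x) i)).card
        = (univ.filter (fun i => a < x i)).card := by
      apply Finset.card_nbij (Tuple.sort x)
      · intro i hi; simp_all
      · intro i hi j hj hij; exact (Tuple.sort x).injective hij
      · intro j hj
        refine ⟨(Tuple.sort x).symm j, ?_, by simp⟩
        simp_all
    have ey : (univ.filter (fun i => a < (y ∘ Tuple.sort y) i)).card
        = (univ.filter (fun i => a < y i)).card := by
      apply Finset.card_nbij (Tuple.sort y)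
      · intro i hi; simp_all
      · intro i hi j hj hij; exact (Tuple.sort y).injective hij
      · intro j hj
        refine ⟨(Tuple.sort y).symm j, ?_, by simp⟩
        simp_all
    rw [ex, ey]; exact hc a
  have key := sorted_dom _ _ hxs hys hc'
  calc ∑ i, f (x i) = ∑ i, f ((x ∘ Tuple.sort x) i) :=
        (Equiv.sum_comp (Tuple.sort x) (fun i => f (x i))).symm
    _ ≤ ∑ i, f ((y ∘ Tuple.sort y) i) := Finset.sum_le_sum fun i _ => hf (key i)
    _ = ∑ i, f (y i) := Equiv.sum_comp (Tuple.sort y) (fun i => f (y i))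

lemma herm_smul_add {n : ℕ} {A B : Matrix (Fin n) (Fin n) ℂ} (hA : A.IsHermitian)
    (hB : B.IsHermitian) (t : ℝ) : (t • A + B).IsHermitian := by
  apply Matrix.IsHermitian.add _ hB
  unfold Matrix.IsHermitian
  rw [Matrix.conjTranspose_smul, hA]
  norm_num

theorem stmt15 (n : ℕ) (A B : Matrix (Fin n) (Fin n) ℂ)
    (hA : A.PosSemidef) (hB : B.IsHermitian)
    (f : ℝ → ℝ) (hf_cont : Continuous f) (hf_mono : Monotone f)
    (F : ℝ → ℝ)
    (hF : ∀ (t : ℝ) (h : (t • A + B).IsHermitian),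
      F t = ∑ i, f (h.eigenvalues i)) :
    Monotone F := by
  intro s t hst
  have hs : (s • A + B).IsHermitian := herm_smul_add hA.1 hB s
  have ht : (t • A + B).IsHermitian := herm_smul_add hA.1 hB t
  rw [hF s hs, hF t ht]
  have hdiff : (t • A + B) - (s • A + B) = (t - s) • A := by
    rw [sub_smul]; abel
  have hpsd : ((t • A + B) - (s • A + B)).PosSemidef := by
    rw [hdiff]
    constructor
    · unfold Matrix.IsHermitian
      rw [Matrix.conjTranspose_smul, hA.1]
      norm_num
    · intro x
      have h0 := hA.2 x
      exact (hA.smul (sub_nonneg.mpr hst)).2 x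
  exact tuple_sum_le _ _ f hf_mono (fun a => count_mono hs ht hpsd a)
end

section
/- Let $\phi : \mathbb{R} \to \mathbb{C}$ be a Schwartz function and $\lambda \in \mathbb{R}$ with $\lambda \neq 0$. Then the function $x \mapsto (\phi(x) - \phi(0) - \phi'(0)x)\frac{1}{x^2}\log\left|1 - \frac{\lambda}{x}\right|$ is integrable on $\mathbb{R}$. -/
open MeasureTheory Set Real



lemma abs_log_le_aux {x : ℝ} (hx : 0 < x) :
    |Real.log x| ≤ 2 * x ^ (-(1/2) : ℝ) + 2 * x ^ ((1/2) : ℝ) := by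
  have h1 : 0 < x ^ ((1/2) : ℝ) := Real.rpow_pos_of_pos hx _
  have h2 : 0 < x ^ (-(1/2) : ℝ) := Real.rpow_pos_of_pos hx _
  have e1 : Real.log (x ^ ((1/2) : ℝ)) = (1/2) * Real.log x := Real.log_rpow hx _
  have e2 : Real.log (x ^ (-(1/2) : ℝ)) = -(1/2) * Real.log x := Real.log_rpow hx _
  have b1 := Real.log_le_sub_one_of_pos h1
  have b2 := Real.log_le_sub_one_of_pos h2
  rw [e1] at b1
  rw [e2] at b2
  rcases le_total 0 (Real.log x) with h | h
  · rw [abs_of_nonneg h]; nlinarith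
  · rw [abs_of_nonpos h]; nlinarith

lemma log_abs_integrableOn {R : ℝ} (hR : 0 ≤ R) :
    IntegrableOn (fun x => Real.log |x|) (Ioc 0 R) volume := by
  have hi : IntervalIntegrable
      (fun x : ℝ => 2 * x ^ (-(1/2) : ℝ) + 2 * x ^ ((1/2) : ℝ)) volume 0 R :=
    ((intervalIntegral.intervalIntegrable_rpow' (by norm_num)).const_mul 2).add
      ((intervalIntegral.intervalIntegrable_rpow' (by norm_num)).const_mul 2)
  rw [intervalIntegrable_iff_integrableOn_Ioc_of_le hR] at hi
  refine Integrable.mono' hi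
    ((Real.measurable_log.comp measurable_abs).aestronglyMeasurable) ?_
  refine (ae_restrict_iff' measurableSet_Ioc).2 (Filter.Eventually.of_forall ?_)
  intro x hx
  have hx0 : 0 < x := hx.1
  rw [Real.norm_eq_abs, abs_of_pos hx0]
  exact abs_log_le_aux hx0

lemma log_abs_intervalIntegrable (a b : ℝ) :
    IntervalIntegrable (fun x => Real.log |x|) volume a b := by
  suffices h : ∀ c : ℝ, IntervalIntegrable (fun x => Real.log |x|) volume 0 c by
    exact (h a).symm.trans (h b)
  have hpos : ∀ c : ℝ, 0 ≤ c → IntervalIntegrable (fun x => Real.log |x|) volume 0 c := by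
    intro c hc
    exact (intervalIntegrable_iff_integrableOn_Ioc_of_le hc).2 (log_abs_integrableOn hc)
  intro c
  rcases le_total 0 c with h | h
  · exact hpos c h
  · rw [IntervalIntegrable.iff_comp_neg]
    simp only [abs_neg, neg_zero]
    exact hpos (-c) (by linarith)

lemma log_abs_shift_intervalIntegrable (c a b : ℝ) :
    IntervalIntegrable (fun x => Real.log |x - c|) volume a b := by
  have := (log_abs_intervalIntegrable (a - c) (b - c)).comp_sub_right c
  simpa using this


lemma log_one_sub_abs_le {t : ℝ} (ht : abs t ≤ 1/2) :
    abs (Real.log (abs (1 - t))) ≤ 2 * abs t := by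
  have h1 : (1:ℝ) - abs t ≤ abs (1 - t) := by
    have := abs_sub_abs_le_abs_sub (1:ℝ) t
    simpa using this
  have h2 : abs (1 - t) ≤ 1 + abs t := by
    calc abs (1 - t) ≤ abs (1:ℝ) + abs t := abs_sub 1 t
      _ = 1 + abs t := by simp
  have hpos : (0:ℝ) < abs (1 - t) := by
    have := abs_nonneg t
    linarith
  have hup : Real.log (abs (1 - t)) ≤ 2 * abs t := by
    have := Real.log_le_sub_one_of_pos hpos
    have h0 := abs_nonneg t
    linarith
  have hlow : -(2 * abs t) ≤ Real.log (abs (1 - t)) := by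
    have hinv : 0 < (abs (1 - t))⁻¹ := by positivity
    have := Real.log_le_sub_one_of_pos hinv
    rw [Real.log_inv] at this
    have key : (abs (1 - t))⁻¹ - 1 ≤ 2 * abs t := by
      have h3 : (abs (1 - t))⁻¹ ≤ 1 + 2 * abs t := by
        rw [inv_le_iff_one_le_mul₀ hpos]
        nlinarith [abs_nonneg t]
      linarith
    linarith
  exact abs_le.2 ⟨hlow, hup⟩


lemma mid_integrable (lam R : ℝ) (hR : 0 ≤ R)
    (hshift : ∀ c a b : ℝ, IntervalIntegrable (fun x => Real.log (abs (x - c))) volume a b) :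
    IntegrableOn (fun x => Real.log (abs (1 - lam / x))) (Icc (-R) R) volume := by
  have hRR : (-R : ℝ) ≤ R := by linarith
  have h1 : IntegrableOn (fun x => Real.log (abs (x - lam)) - Real.log (abs x))
      (Icc (-R) R) volume := by
    rw [integrableOn_Icc_iff_integrableOn_Ioc]
    have ha := (intervalIntegrable_iff_integrableOn_Ioc_of_le hRR).1 (hshift lam (-R) R)
    have heq : (fun x : ℝ => Real.log (abs (x - 0))) = fun x => Real.log (abs x) := by
      funext y; rw [sub_zero]
    have hb := (intervalIntegrable_iff_integrableOn_Ioc_of_le hRR).1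
      (heq ▸ hshift 0 (-R) R)
    exact ha.sub hb
  refine h1.congr ?_
  have hnull : volume ({0, lam} : Set ℝ) = 0 :=
    Set.Countable.measure_zero ((Set.countable_singleton lam).insert 0) _
  have hae : ∀ᵐ x : ℝ ∂volume, x ∉ ({0, lam} : Set ℝ) := by
    rw [ae_iff]
    convert hnull using 2
    ext y
    simp only [Set.mem_setOf_eq, Set.mem_insert_iff, Set.mem_singleton_iff]
    tauto
  refine ae_restrict_of_ae (hae.mono ?_)
  intro x hx
  simp only [Set.mem_insert_iff, Set.mem_singleton_iff, not_or] at hx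
  obtain ⟨hx0, hxl⟩ := hx
  have h2 : 1 - lam / x = (x - lam) / x := by field_simp
  show Real.log (abs (x - lam)) - Real.log (abs x) = Real.log (abs (1 - lam / x))
  rw [h2, abs_div, Real.log_div (abs_ne_zero.2 (sub_ne_zero.2 hxl)) (abs_ne_zero.2 hx0)]


-- Taylor-type bound for Schwartz functions
lemma schwartz_taylor_bound (φ : SchwartzMap ℝ ℂ) :
    ∃ M : ℝ, 0 ≤ M ∧ ∀ x : ℝ, ‖φ x - φ 0 - deriv (⇑φ) 0 * (x : ℂ)‖ ≤ M * x ^ 2 := by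
  set φ' := SchwartzMap.derivCLM ℝ ℂ φ with hφ'
  set φ'' := SchwartzMap.derivCLM ℝ ℂ φ' with hφ''
  have hc1 : ⇑φ' = deriv ⇑φ := funext fun x => SchwartzMap.derivCLM_apply ℝ φ x
  have hc2 : ⇑φ'' = deriv (deriv ⇑φ) := by
    rw [funext fun x => SchwartzMap.derivCLM_apply ℝ φ' x, hc1]
  refine ⟨SchwartzMap.seminorm ℝ 0 0 φ'', apply_nonneg _ _, ?_⟩
  set M := (SchwartzMap.seminorm ℝ 0 0) φ'' with hM
  have hbound2 : ∀ x : ℝ, ‖deriv (deriv ⇑φ) x‖ ≤ M := by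
    intro x
    rw [← hc2]
    exact SchwartzMap.norm_le_seminorm ℝ φ'' x
  have hd1 : Differentiable ℝ (⇑φ) := φ.differentiable
  have hd2 : Differentiable ℝ (deriv ⇑φ) := by
    rw [← hc1]; exact φ'.differentiable
  -- step 1 : ‖deriv φ x - deriv φ 0‖ ≤ M * |x|
  have step1 : ∀ x : ℝ, ‖deriv (⇑φ) x - deriv (⇑φ) 0‖ ≤ M * |x| := by
    intro x
    have := Convex.norm_image_sub_le_of_norm_deriv_le
      (f := deriv ⇑φ) (s := Set.univ) (C := M)
      (fun y _ => hd2 y) (fun y _ => hbound2 y) convex_univ (Set.mem_univ 0) (Set.mem_univ x)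
    simpa using this
  intro x
  set ψ : ℝ → ℂ := fun y => φ y - φ 0 - deriv (⇑φ) 0 * (y : ℂ) with hψ
  have hψ0 : ψ 0 = 0 := by simp [hψ]
  have hder : ∀ y : ℝ, HasDerivAt ψ (deriv (⇑φ) y - deriv (⇑φ) 0) y := by
    intro y
    have h1 : HasDerivAt (⇑φ) (deriv (⇑φ) y) y := (hd1 y).hasDerivAt
    have h2 : HasDerivAt (fun y : ℝ => ((y : ℂ))) 1 y := by
      exact Complex.ofRealCLM.hasDerivAt (x := y)
    have h3 : HasDerivAt (fun y : ℝ => deriv (⇑φ) 0 * (y : ℂ)) (deriv (⇑φ) 0) y := by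
      simpa using h2.const_mul (deriv (⇑φ) 0)
    exact (h1.sub_const (φ 0)).sub h3
  have key : ‖ψ x - ψ 0‖ ≤ M * |x| * ‖x - (0:ℝ)‖ := by
    refine Convex.norm_image_sub_le_of_norm_hasDerivWithin_le
      (f := ψ) (f' := fun y => deriv (⇑φ) y - deriv (⇑φ) 0) (s := Set.uIcc 0 x)
      (fun y _ => (hder y).hasDerivWithinAt) ?_ (convex_uIcc 0 x)
      (Set.left_mem_uIcc) (Set.right_mem_uIcc)
    intro y hy
    refine (step1 y).trans ?_
    have h4 : |y| ≤ |x| := by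
      rcases Set.mem_uIcc.1 hy with ⟨h5, h6⟩ | ⟨h5, h6⟩
      · rw [abs_of_nonneg h5, abs_of_nonneg (h5.trans h6)]; exact h6
      · rw [abs_of_nonpos h6, abs_of_nonpos (h5.trans h6)]; linarith
    have hM0 : 0 ≤ M := apply_nonneg _ _
    exact mul_le_mul_of_nonneg_left h4 hM0
  rw [hψ0, sub_zero] at key
  calc ‖ψ x‖ ≤ M * |x| * ‖x - (0:ℝ)‖ := key
    _ = M * x ^ 2 := by
      rw [sub_zero, Real.norm_eq_abs, mul_assoc, abs_mul_abs_self, sq]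

theorem stmt17 (φ : SchwartzMap ℝ ℂ) (lam : ℝ) (hlam : lam ≠ 0) :
    Integrable (fun x : ℝ =>
      (φ x - φ 0 - deriv (⇑φ) 0 * (x : ℂ)) / (x : ℂ) ^ 2 *
        (Real.log |1 - lam / x| : ℂ)) volume := by
  set q : ℝ → ℂ := fun x => (φ x - φ 0 - deriv (⇑φ) 0 * (x : ℂ)) / (x : ℂ) ^ 2 with hq
  set L : ℝ → ℝ := fun x => Real.log |1 - lam / x| with hL
  set f : ℝ → ℂ := fun x => q x * (L x : ℂ) with hf
  show Integrable f volume
  -- measurability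
  have mcoe : Measurable fun x : ℝ => (x : ℂ) := Complex.measurable_ofReal
  have m1 : Measurable q :=
    ((φ.continuous.measurable.sub measurable_const).sub
      (measurable_const.mul mcoe)).div (mcoe.pow_const 2)
  have m2 : Measurable L :=
    Real.measurable_log.comp ((measurable_const.sub
      ((measurable_const (α := ℝ) (a := lam)).div measurable_id)).abs)
  have meas : AEStronglyMeasurable f volume :=
    (m1.mul (mcoe.comp m2)).aestronglyMeasurable
  -- bounds
  obtain ⟨M, hM0, hMbd⟩ := schwartz_taylor_bound φ
  have normsq : ∀ x : ℝ, ‖((x : ℂ)) ^ 2‖ = x ^ 2 := by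
    intro x
    rw [norm_pow, Complex.norm_real, Real.norm_eq_abs, sq_abs]
  have hqbd : ∀ x : ℝ, ‖q x‖ ≤ M := by
    intro x
    rcases eq_or_ne x 0 with rfl | hx
    · simp [hq]
      exact hM0
    · have hx2 : (0:ℝ) < x ^ 2 := by positivity
      rw [hq, norm_div, normsq, div_le_iff₀ hx2]
      exact hMbd x
  set R : ℝ := 2 * |lam| + 1 with hR
  have hRpos : 0 < R := by have := abs_nonneg lam; rw [hR]; linarith
  -- middle part
  have hmid : IntegrableOn f (Icc (-R) R) volume := by
    refine Integrable.bdd_mul ?_ m1.aestronglyMeasurable (ae_of_all _ hqbd)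
    exact (mid_integrable lam R hRpos.le log_abs_shift_intervalIntegrable).ofReal
  -- tail bound
  set B : ℝ := (SchwartzMap.seminorm ℝ 0 0) φ with hB
  set D : ℝ := ‖deriv (⇑φ) 0‖ with hD
  set C0 : ℝ := (2 * B + D) * (2 * |lam|) with hC0
  have hBnn : 0 ≤ B := apply_nonneg _ _
  have hDnn : 0 ≤ D := norm_nonneg _
  set G : ℝ → ℝ := fun x => C0 * |x| ^ (-2 : ℝ) with hG
  have tailbound : ∀ x : ℝ, R ≤ |x| → ‖f x‖ ≤ G x := by
    intro x hx
    have ha1 : (1:ℝ) ≤ |x| := by have := abs_nonneg lam; rw [hR] at hx; linarith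
    have ha0 : (0:ℝ) < |x| := by linarith
    have hx0 : x ≠ 0 := by
      intro h; rw [h] at ha0; simp at ha0
    have hx2 : x ^ 2 = |x| ^ 2 := (sq_abs x).symm
    -- norm of psi
    have hpsi : ‖φ x - φ 0 - deriv (⇑φ) 0 * (x : ℂ)‖ ≤ (2 * B + D) * |x| := by
      have t1 : ‖φ x - φ 0 - deriv (⇑φ) 0 * (x : ℂ)‖
          ≤ ‖φ x - φ 0‖ + ‖deriv (⇑φ) 0 * (x : ℂ)‖ := norm_sub_le _ _
      have t2 : ‖φ x - φ 0‖ ≤ ‖φ x‖ + ‖φ 0‖ := norm_sub_le _ _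
      have t3 : ‖φ x‖ ≤ B := SchwartzMap.norm_le_seminorm ℝ φ x
      have t4 : ‖φ 0‖ ≤ B := SchwartzMap.norm_le_seminorm ℝ φ 0
      have t5 : ‖deriv (⇑φ) 0 * (x : ℂ)‖ = D * |x| := by
        rw [norm_mul, Complex.norm_real, Real.norm_eq_abs]
      nlinarith
    -- log bound
    have hlam2 : |lam / x| ≤ 1 / 2 := by
      rw [abs_div, div_le_iff₀ ha0]
      rw [hR] at hx
      linarith
    have hlog : |L x| ≤ 2 * (|lam| / |x|) := by
      have := log_one_sub_abs_le hlam2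
      rw [abs_div] at this
      exact this
    have hLnn : 0 ≤ |L x| := abs_nonneg _
    -- assemble
    have e1 : ‖f x‖ = ‖φ x - φ 0 - deriv (⇑φ) 0 * (x : ℂ)‖ * |L x| / |x| ^ 2 := by
      rw [hf, norm_mul, Complex.norm_real, Real.norm_eq_abs, hq, norm_div, normsq, hx2]
      ring
    have e2 : G x = C0 / |x| ^ 2 := by
      have e3 : |x| ^ (-2 : ℝ) = (|x| ^ 2)⁻¹ := by
        rw [show (-2 : ℝ) = -((2:ℕ) : ℝ) by norm_num, Real.rpow_neg (abs_nonneg x),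
          Real.rpow_natCast]
      show C0 * |x| ^ (-2 : ℝ) = C0 / |x| ^ 2
      rw [e3, div_eq_mul_inv]
    have hnum : ‖φ x - φ 0 - deriv (⇑φ) 0 * (x : ℂ)‖ * |L x| ≤ C0 := by
      have := mul_le_mul hpsi hlog hLnn (by positivity : (0:ℝ) ≤ (2 * B + D) * |x|)
      refine this.trans_eq ?_
      rw [hC0]
      field_simp
    rw [e1, e2]
    gcongr
  -- tail integrability
  have hGIci : IntegrableOn G (Ici R) volume := by
    have hsub : Ici R ⊆ Ioi (R / 2) := fun y hy => by
      simp only [mem_Ioi]; simp only [mem_Ici] at hy; linarith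
    have base : IntegrableOn (fun x : ℝ => x ^ (-2 : ℝ)) (Ioi (R / 2)) volume :=
      integrableOn_Ioi_rpow_of_lt (by norm_num) (by linarith)
    have base2 : IntegrableOn (fun x : ℝ => C0 * x ^ (-2 : ℝ)) (Ici R) volume :=
      IntegrableOn.mono_set (base.const_mul C0) hsub
    refine base2.congr_fun (fun y hy => ?_) measurableSet_Ici
    simp only [mem_Ici] at hy
    show C0 * y ^ (-2 : ℝ) = C0 * |y| ^ (-2 : ℝ)
    rw [abs_of_nonneg (by linarith : (0:ℝ) ≤ y)]
  have hGIic : IntegrableOn G (Iic (-R)) volume := by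
    have := (MeasurePreserving.integrableOn_comp_preimage
      (Measure.measurePreserving_neg (volume : Measure ℝ))
      (Homeomorph.neg ℝ).measurableEmbedding).2 hGIci
    have hpre : (Neg.neg : ℝ → ℝ) ⁻¹' (Ici R) = Iic (-R) := by
      ext y; simp only [mem_preimage, mem_Ici, mem_Iic]; constructor <;> intro h <;> linarith
    rw [hpre] at this
    refine this.congr_fun (fun y _ => ?_) measurableSet_Iic
    show C0 * |(-y)| ^ (-2 : ℝ) = C0 * |y| ^ (-2 : ℝ)
    rw [abs_neg]
  have hIci : IntegrableOn f (Ici R) volume := by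
    refine Integrable.mono' hGIci meas.restrict ?_
    refine (ae_restrict_iff' measurableSet_Ici).2 (Filter.Eventually.of_forall ?_)
    intro x hx
    simp only [mem_Ici] at hx
    exact tailbound x (by rw [abs_of_nonneg (by linarith : (0:ℝ) ≤ x)]; exact hx)
  have hIic : IntegrableOn f (Iic (-R)) volume := by
    refine Integrable.mono' hGIic meas.restrict ?_
    refine (ae_restrict_iff' measurableSet_Iic).2 (Filter.Eventually.of_forall ?_)
    intro x hx
    simp only [mem_Iic] at hx
    refine tailbound x ?_
    rw [abs_of_nonpos (by linarith : x ≤ 0)]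
    linarith
  have hall : IntegrableOn f (Iic (-R) ∪ Icc (-R) R ∪ Ici R) volume :=
    (hIic.union hmid).union hIci
  have huniv : Iic (-R) ∪ Icc (-R) R ∪ Ici R = (univ : Set ℝ) := by
    rw [Set.Iic_union_Icc_eq_Iic (by linarith : (-R : ℝ) ≤ R), Set.Iic_union_Ici]
  rw [huniv] at hall
  exact integrableOn_univ.1 hall
end
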